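/- arXiv:1306.4531 — 5 statements merged into one kernel-verified Lean document; each statement's English description precedes it below -/
import Mathlib

section
/- Let L be the generator of a trace-preserving quantum dynamical semigroup on the trace class operators of a separable complex Hilbert space H, and suppose L is in generalized standard form: there are a closed densely defined operator M on H generating a contraction semigroup and operators L_k on D(M), each relatively bounded with respect to M, with L(ρ) = Σ_k L_k ρ L_k† − Mρ − ρM† for all finite-rank ρ = Σ_n |φ_n⟩⟨ψ_n| with φ_n, ψ_n ∈ D(M), the set D_0 of such ρ a core for L, and Σ_k ‖L_k φ‖² = 2 Re⟨φ, Mφ⟩ for all φ ∈ D(M). Then the semigroup is matrix normal: there exists an orthonormal basis {e_k} of H such that D_e² (the span of the matrix units |e_k⟩⟨e_ℓ|) is a core for L. -/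
open Filter Set
open scoped InnerProductSpace ComplexConjugate ComplexOrder Topology ComplexInnerProductSpace

noncomputable section

variable {H T : Type*}

/-- An abstract model of the Banach space `𝔗(H)` of trace-class operators on the Hilbert
space `H`, equipped with the trace norm `‖·‖₁`: a Banach space `T` acting injectively as
bounded operators on `H`, containing all rank-one operators `|x⟩⟨y|` (with
`‖ |x⟩⟨y| ‖₁ = ‖x‖·‖y‖`, their span being dense), together with the trace functional. -/
structure TraceClassModel (H T : Type*) [NormedAddCommGroup H] [InnerProductSpace ℂ H]
    [NormedAddCommGroup T] [NormedSpace ℂ T] where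
  /-- a trace-class operator acts as a bounded operator on `H` -/
  toCLM : T →ₗ[ℂ] (H →L[ℂ] H)
  toCLM_injective : Function.Injective toCLM
  /-- the rank-one operator `|x⟩⟨y| : z ↦ ⟪y, z⟫ • x` as a trace-class operator -/
  rankOne : H → H → T
  toCLM_rankOne : ∀ x y z : H, toCLM (rankOne x y) z = ⟪y, z⟫_ℂ • x
  norm_rankOne : ∀ x y : H, ‖rankOne x y‖ = ‖x‖ * ‖y‖
  dense_span_rankOne :
    Dense ((Submodule.span ℂ (Set.range fun p : H × H => rankOne p.1 p.2) : Submodule ℂ T) : Set T)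
  /-- the trace, a continuous linear functional for the trace norm -/
  trace : T →L[ℂ] ℂ
  trace_rankOne : ∀ x y : H, trace (rankOne x y) = ⟪y, x⟫_ℂ

variable [NormedAddCommGroup H] [InnerProductSpace ℂ H] [CompleteSpace H]
  [NormedAddCommGroup T] [NormedSpace ℂ T] [CompleteSpace T]

/-- The standard criterion for complete positivity of a map on trace-class operators:
`∑_{k,ℓ} ⟪ψ_k, P(|φ_k⟩⟨φ_ℓ|) ψ_ℓ⟫ ≥ 0` for all finite families of vectors. -/
def TraceClassModel.IsCPMap (Mod : TraceClassModel H T) (P : T → T) : Prop :=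
  ∀ (N : ℕ) (φ ψ : Fin N → H),
    0 ≤ ∑ k, ∑ l, ⟪ψ k, Mod.toCLM (P (Mod.rankOne (φ k) (φ l))) (ψ l)⟫_ℂ

/-- A quantum dynamical semigroup: a strongly continuous semigroup of trace-preserving
completely positive linear maps on the trace class. -/
structure QDS {H T : Type*} [NormedAddCommGroup H] [InnerProductSpace ℂ H]
    [NormedAddCommGroup T] [NormedSpace ℂ T] (Mod : TraceClassModel H T) where
  map : ℝ → T →L[ℂ] T
  map_zero : map 0 = ContinuousLinearMap.id ℂ T
  map_add : ∀ s t : ℝ, 0 ≤ s → 0 ≤ t → map (s + t) = (map s).comp (map t)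
  strong_continuity : ∀ ρ : T, ContinuousOn (fun t : ℝ => map t ρ) (Ici 0)
  trace_preserving : ∀ t : ℝ, 0 ≤ t → ∀ ρ : T, Mod.trace (map t ρ) = Mod.trace ρ
  completely_positive : ∀ t : ℝ, 0 ≤ t → Mod.IsCPMap (map t)

variable {Mod : TraceClassModel H T}

/-- `σ = lim_{t→0+} (T^t ρ - ρ)/t` in trace norm. -/
def QDS.HasGenDerivAt (S : QDS Mod) (ρ σ : T) : Prop :=
  Tendsto (fun t : ℝ => (t : ℂ)⁻¹ • (S.map t ρ - ρ)) (𝓝[>] 0) (𝓝 σ)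

/-- The generator of a QDS: the function `L` defined on its maximal domain `Dom`,
consisting of all `ρ` for which `(T^t ρ - ρ)/t` converges in trace norm as `t → 0+`. -/
structure QDS.Generator {H T : Type*} [NormedAddCommGroup H] [InnerProductSpace ℂ H]
    [NormedAddCommGroup T] [NormedSpace ℂ T] {Mod : TraceClassModel H T} (S : QDS Mod) where
  Dom : Set T
  L : T → T
  mem_dom_iff : ∀ ρ : T, ρ ∈ Dom ↔ ∃ σ, S.HasGenDerivAt ρ σ
  hasGenDerivAt : ∀ ρ ∈ Dom, S.HasGenDerivAt ρ (L ρ)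

/-- `D` is a core for the operator `L` with domain `Dom`: `D ⊆ Dom` and `D` is dense in
`Dom` with respect to the graph norm `‖ρ‖ + ‖L ρ‖`. -/
def IsCoreFor {E : Type*} [NormedAddCommGroup E] (L : E → E) (Dom D : Set E) : Prop :=
  D ⊆ Dom ∧ ∀ ρ ∈ Dom, ∀ ε : ℝ, 0 < ε → ∃ σ ∈ D, ‖ρ - σ‖ + ‖L ρ - L σ‖ < ε

/-- `e` is an orthonormal basis of `H`. -/
def IsONBasis {ι : Type*} (e : ι → H) : Prop :=
  Orthonormal ℂ e ∧ Dense ((Submodule.span ℂ (Set.range e) : Submodule ℂ H) : Set H)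

/-- `D_e²`: the linear span of the matrix units `|e_k⟩⟨e_ℓ|` of the basis `e`. -/
def TraceClassModel.De2 (Mod : TraceClassModel H T) {ι : Type*} (e : ι → H) : Set T :=
  (Submodule.span ℂ (Set.range fun p : ι × ι => Mod.rankOne (e p.1) (e p.2)) : Submodule ℂ T)

/-- The QDS is matrix normal with respect to the orthonormal basis `e`:
`D_e²` is a core for the generator. -/
def QDS.Generator.MatrixNormal {S : QDS Mod} (G : S.Generator) {ι : Type*} (e : ι → H) : Prop :=
  IsONBasis e ∧ IsCoreFor G.L G.Dom (Mod.De2 e)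

/-- `M` (a densely defined unbounded operator on `H`) generates a strongly continuous
contraction semigroup `C t = e^{-tM}` on `H`, whose generator `-M` has domain exactly
`M.domain`. -/
def GeneratesContractionSemigroupPMap (M : H →ₗ.[ℂ] H) : Prop :=
  ∃ C : ℝ → H →L[ℂ] H,
    C 0 = ContinuousLinearMap.id ℂ H ∧
    (∀ s t : ℝ, 0 ≤ s → 0 ≤ t → C (s + t) = (C s).comp (C t)) ∧
    (∀ t : ℝ, 0 ≤ t → ‖C t‖ ≤ 1) ∧
    (∀ ψ : H, ContinuousOn (fun t : ℝ => C t ψ) (Ici 0)) ∧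
    (∀ ψ : H, ψ ∈ M.domain ↔
      ∃ η, Tendsto (fun t : ℝ => (t : ℂ)⁻¹ • (C t ψ - ψ)) (𝓝[>] 0) (𝓝 η)) ∧
    (∀ φ : M.domain,
      Tendsto (fun t : ℝ => (t : ℂ)⁻¹ • (C t (φ : H) - (φ : H))) (𝓝[>] 0) (𝓝 (-(M φ))))

/-- `Mf : H → H`, restricted to `D`, generates a strongly continuous contraction semigroup
`C t = e^{-tMf}` on `H`, whose generator `-Mf` has domain exactly `D`. -/
def GeneratesContractionSemigroupOn (Mf : H → H) (D : Set H) : Prop :=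
  ∃ C : ℝ → H →L[ℂ] H,
    C 0 = ContinuousLinearMap.id ℂ H ∧
    (∀ s t : ℝ, 0 ≤ s → 0 ≤ t → C (s + t) = (C s).comp (C t)) ∧
    (∀ t : ℝ, 0 ≤ t → ‖C t‖ ≤ 1) ∧
    (∀ ψ : H, ContinuousOn (fun t : ℝ => C t ψ) (Ici 0)) ∧
    (∀ ψ : H, ψ ∈ D ↔
      ∃ η, Tendsto (fun t : ℝ => (t : ℂ)⁻¹ • (C t ψ - ψ)) (𝓝[>] 0) (𝓝 η)) ∧
    (∀ ψ ∈ D, Tendsto (fun t : ℝ => (t : ℂ)⁻¹ • (C t ψ - ψ)) (𝓝[>] 0) (𝓝 (-Mf ψ)))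

/-! The graph of `M` is a separable subset of `H × H`, so some sequence `u` in `D(M)` is dense
in the graph norm. Gram–Schmidt turns `u` into an orthonormal family `e` with the same span;
this span lies in `D(M)` and is dense in `H` because `D(M)` is. The identity
`∑ₖ ‖Lₖ φ‖² = 2 Re ⟪φ, M φ⟫` bounds `(Lₖ φ)ₖ` in `ℓ²` by the graph norm of `φ`, so by
Cauchy–Schwarz `L(|φ⟩⟨ψ|) = ∑ₖ |Lₖ φ⟩⟨Lₖ ψ| - |M φ⟩⟨ψ| - |φ⟩⟨M ψ|` depends jointly
continuously on `φ, ψ` in the graph norm. Hence every element of the core `D₀` is a limit, in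
the graph norm of `L`, of elements of `D_e² ⊆ D₀`, and `D_e²` is a core as well. -/

namespace LinearPMap

section

variable {R E F : Type*} [Ring R] [AddCommGroup E] [Module R E] [AddCommGroup F] [Module R F]

def graphMap (f : E →ₗ.[R] F) : f.domain →ₗ[R] E × F :=
  f.domain.subtype.prod f.toFun

@[simp]
lemma graphMap_apply (f : E →ₗ.[R] F) (x : f.domain) : f.graphMap x = ((x : E), f x) := rfl

end

lemma re_inner_le_norm_graphMap_sq {𝕜 E : Type*} [RCLike 𝕜] [NormedAddCommGroup E]
    [InnerProductSpace 𝕜 E] (f : E →ₗ.[𝕜] E) (x : f.domain) :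
    RCLike.re ⟪(x : E), f x⟫_𝕜 ≤ ‖f.graphMap x‖ ^ 2 :=
  calc RCLike.re ⟪(x : E), f x⟫_𝕜 ≤ ‖(x : E)‖ * ‖f x‖ := re_inner_le_norm _ _
    _ ≤ ‖f.graphMap x‖ * ‖f.graphMap x‖ :=
      mul_le_mul (norm_fst_le (f.graphMap x)) (norm_snd_le (f.graphMap x)) (norm_nonneg _)
        (norm_nonneg _)
    _ = ‖f.graphMap x‖ ^ 2 := (sq _).symm

theorem exists_seq_tendsto_graphMap {R E F : Type*} [Ring R]
    [NormedAddCommGroup E] [Module R E] [NormedAddCommGroup F] [Module R F]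
    [TopologicalSpace.SeparableSpace E] [TopologicalSpace.SeparableSpace F] (f : E →ₗ.[R] F) :
    ∃ u : ℕ → f.domain, ∀ x : f.domain, ∃ a : ℕ → ℕ,
      Tendsto (fun j => f.graphMap (u (a j))) atTop (𝓝 (f.graphMap x)) := by
  obtain ⟨g, hg⟩ := TopologicalSpace.exists_dense_seq f.graph
  choose u hu using fun n => f.mem_graph_iff'.1 (g n).2
  refine ⟨u, fun x => ?_⟩
  have hx := closure_subtype.1 (hg (⟨_, f.mem_graph x⟩ : f.graph))
  rw [← Set.range_comp] at hx
  obtain ⟨s, hs, hlim⟩ := mem_closure_iff_seq_limit.1 hx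
  choose a ha using hs
  refine ⟨a, ?_⟩
  convert hlim using 2 with j
  · simp [← ha, hu]
  · rfl

end LinearPMap

open InnerProductSpace in
theorem exists_orthonormal_span_range_eq (𝕜 : Type*) {E : Type*} [RCLike 𝕜]
    [NormedAddCommGroup E] [InnerProductSpace 𝕜 E] (v : ℕ → E) :
    ∃ (ι : Type) (_ : Countable ι) (e : ι → E),
      Orthonormal 𝕜 e ∧ Submodule.span 𝕜 (range e) = Submodule.span 𝕜 (range v) := by
  refine ⟨_, inferInstance, _, gramSchmidtNormed_orthonormal' (𝕜 := 𝕜) v, ?_⟩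
  have hrange : range (fun i : {i | gramSchmidtNormed 𝕜 v i ≠ 0} => gramSchmidtNormed 𝕜 v i)
      = range (gramSchmidtNormed 𝕜 v) \ {0} := by
    ext; aesop
  rw [hrange, Submodule.span_sdiff_singleton_zero, span_gramSchmidtNormed_range,
    span_gramSchmidt]

theorem Real.tsum_mul_le_sqrt_mul_sqrt {ι : Type*} {f g : ι → ℝ} (hf : ∀ i, 0 ≤ f i)
    (hg : ∀ i, 0 ≤ g i) (hf2 : Summable fun i => f i ^ 2) (hg2 : Summable fun i => g i ^ 2) :
    (Summable fun i => f i * g i) ∧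
      ∑' i, f i * g i ≤ √(∑' i, f i ^ 2) * √(∑' i, g i ^ 2) := by
  simp_rw [← Real.rpow_two, Real.sqrt_eq_rpow] at *
  exact summable_and_inner_le_Lp_mul_Lq_tsum_of_nonneg .two_two hf hg hf2 hg2

theorem IsCoreFor.of_tendsto {E : Type*} [NormedAddCommGroup E] {L : E → E} {Dom D D' : Set E}
    (hD : IsCoreFor L Dom D) (hD' : D' ⊆ Dom)
    (happrox : ∀ σ ∈ D, ∃ s : ℕ → E, (∀ j, s j ∈ D') ∧ Tendsto s atTop (𝓝 σ) ∧
      Tendsto (fun j => L (s j)) atTop (𝓝 (L σ))) :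
    IsCoreFor L Dom D' := by
  refine ⟨hD', fun ρ hρ ε hε => ?_⟩
  obtain ⟨σ, hσ, hρσ⟩ := hD.2 ρ hρ (ε / 2) (half_pos hε)
  obtain ⟨s, hsD', hs, hLs⟩ := happrox σ hσ
  have hsmall : Tendsto (fun j => ‖σ - s j‖ + ‖L σ - L (s j)‖) atTop (𝓝 0) := by
    simpa using (hs.const_sub σ).norm.add (hLs.const_sub (L σ)).norm
  obtain ⟨j, hj⟩ := (hsmall.eventually (gt_mem_nhds (half_pos hε))).exists
  refine ⟨s j, hsD' j, ?_⟩
  calc ‖ρ - s j‖ + ‖L ρ - L (s j)‖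
      ≤ (‖ρ - σ‖ + ‖σ - s j‖) + (‖L ρ - L σ‖ + ‖L σ - L (s j)‖) :=
        add_le_add (norm_sub_le_norm_sub_add_norm_sub _ _ _)
          (norm_sub_le_norm_sub_add_norm_sub _ _ _)
    _ < ε := by linarith

namespace TraceClassModel

section

variable {H T : Type*} [NormedAddCommGroup H] [InnerProductSpace ℂ H]
  [NormedAddCommGroup T] [NormedSpace ℂ T] (Mod : TraceClassModel H T)

lemma rankOne_add_left (x x' y : H) :
    Mod.rankOne (x + x') y = Mod.rankOne x y + Mod.rankOne x' y :=
  Mod.toCLM_injective <| by ext z; simp [Mod.toCLM_rankOne]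

lemma rankOne_sub_left (x x' y : H) :
    Mod.rankOne (x - x') y = Mod.rankOne x y - Mod.rankOne x' y :=
  Mod.toCLM_injective <| by ext z; simp [Mod.toCLM_rankOne, smul_sub]

lemma rankOne_smul_left (c : ℂ) (x y : H) : Mod.rankOne (c • x) y = c • Mod.rankOne x y :=
  Mod.toCLM_injective <| by ext z; simp [Mod.toCLM_rankOne, smul_comm c]

lemma rankOne_zero_left (y : H) : Mod.rankOne 0 y = 0 := by
  simpa using Mod.rankOne_smul_left 0 0 y

lemma rankOne_add_right (x y y' : H) :
    Mod.rankOne x (y + y') = Mod.rankOne x y + Mod.rankOne x y' :=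
  Mod.toCLM_injective <| by ext z; simp [Mod.toCLM_rankOne, add_smul]

lemma rankOne_sub_right (x y y' : H) :
    Mod.rankOne x (y - y') = Mod.rankOne x y - Mod.rankOne x y' :=
  Mod.toCLM_injective <| by ext z; simp [Mod.toCLM_rankOne, sub_smul]

lemma rankOne_smul_right (c : ℂ) (x y : H) :
    Mod.rankOne x (c • y) = conj c • Mod.rankOne x y :=
  Mod.toCLM_injective <| by ext z; simp [Mod.toCLM_rankOne, mul_smul, smul_comm ⟪y, z⟫_ℂ]

lemma rankOne_zero_right (x : H) : Mod.rankOne x 0 = 0 := by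
  simpa using Mod.rankOne_smul_right 0 x 0

lemma isBoundedBilinearMap_rankOne :
    IsBoundedBilinearMap ℝ fun p : H × H => Mod.rankOne p.1 p.2 where
  add_left := Mod.rankOne_add_left
  smul_left c x y := by simp only [← Complex.coe_smul, rankOne_smul_left]
  add_right := Mod.rankOne_add_right
  smul_right c x y := by simp only [← Complex.coe_smul, rankOne_smul_right, Complex.conj_ofReal]
  bound := ⟨1, one_pos, fun x y => by rw [Mod.norm_rankOne, one_mul]⟩

lemma tendsto_rankOne {α : Type*} {l : Filter α} {x y : α → H} {x₀ y₀ : H}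
    (hx : Tendsto x l (𝓝 x₀)) (hy : Tendsto y l (𝓝 y₀)) :
    Tendsto (fun j => Mod.rankOne (x j) (y j)) l (𝓝 (Mod.rankOne x₀ y₀)) :=
  (Mod.isBoundedBilinearMap_rankOne.continuous.tendsto (x₀, y₀)).comp (hx.prodMk_nhds hy)

lemma rankOne_mem_De2 {ι : Type*} {e : ι → H} {x y : H}
    (hx : x ∈ Submodule.span ℂ (range e)) (hy : y ∈ Submodule.span ℂ (range e)) :
    Mod.rankOne x y ∈ Mod.De2 e := by
  induction hx using Submodule.span_induction with
  | mem x hx =>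
    obtain ⟨i, rfl⟩ := hx
    induction hy using Submodule.span_induction with
    | mem y hy =>
      obtain ⟨j, rfl⟩ := hy
      exact Submodule.subset_span ⟨(i, j), rfl⟩
    | zero => rw [rankOne_zero_right]; exact Submodule.zero_mem _
    | add y y' _ _ hy hy' => rw [rankOne_add_right]; exact Submodule.add_mem _ hy hy'
    | smul c y _ hy => rw [rankOne_smul_right]; exact Submodule.smul_mem _ _ hy
  | zero => rw [rankOne_zero_left]; exact Submodule.zero_mem _
  | add x x' _ _ hx hx' => rw [rankOne_add_left]; exact Submodule.add_mem _ hx hx'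
  | smul c x _ hx => rw [rankOne_smul_left]; exact Submodule.smul_mem _ _ hx

lemma De2_subset_sums_rankOne {ι : Type*} {e : ι → H} (D : Submodule ℂ H)
    (he : ∀ i, e i ∈ D) :
    Mod.De2 e ⊆ {ρ | ∃ (N : ℕ) (φ ψ : Fin N → D), ρ = ∑ n, Mod.rankOne (φ n) (ψ n)} := by
  intro ρ hρ
  obtain ⟨N, c, g, hg⟩ := Submodule.mem_span_set'.1 hρ
  choose p hp using fun n => (g n).2
  refine ⟨N, fun n => ⟨c n • e (p n).1, D.smul_mem _ (he _)⟩, fun n => ⟨e (p n).2, he _⟩, ?_⟩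
  simp only [← hg, ← hp, rankOne_smul_left]

variable {M : H →ₗ.[ℂ] H} (Lk : ℕ → M.domain →ₗ[ℂ] H)

/-- `∑ₖ Lₖ |φ⟩⟨ψ| Lₖ†`; `lindbladTerm` below is the generalized standard form of `L(|φ⟩⟨ψ|)`. -/
def jumpTerm (φ ψ : M.domain) : T :=
  ∑' k, Mod.rankOne (Lk k φ) (Lk k ψ)

def lindbladTerm (φ ψ : M.domain) : T :=
  Mod.jumpTerm Lk φ ψ - Mod.rankOne (M φ) ψ - Mod.rankOne φ (M ψ)

variable {Lk} {C : ℝ}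
  (hL : ∀ φ, Summable (fun k => ‖Lk k φ‖ ^ 2) ∧ ∑' k, ‖Lk k φ‖ ^ 2 ≤ C * ‖M.graphMap φ‖ ^ 2)
include hL

lemma summable_norm_rankOne (φ ψ : M.domain) :
    Summable fun k => ‖Mod.rankOne (Lk k φ) (Lk k ψ)‖ := by
  simp only [Mod.norm_rankOne]
  exact (Real.tsum_mul_le_sqrt_mul_sqrt (fun _ => norm_nonneg _) (fun _ => norm_nonneg _)
    (hL φ).1 (hL ψ).1).1

lemma norm_jumpTerm_le (hC : 0 ≤ C) (φ ψ : M.domain) :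
    ‖Mod.jumpTerm Lk φ ψ‖ ≤ C * ‖M.graphMap φ‖ * ‖M.graphMap ψ‖ := by
  have hsqrt : √(C * ‖M.graphMap φ‖ ^ 2) * √(C * ‖M.graphMap ψ‖ ^ 2)
      = C * ‖M.graphMap φ‖ * ‖M.graphMap ψ‖ := by
    rw [← Real.sqrt_mul (by positivity), show C * ‖M.graphMap φ‖ ^ 2 * (C * ‖M.graphMap ψ‖ ^ 2)
      = (C * ‖M.graphMap φ‖ * ‖M.graphMap ψ‖) ^ 2 by ring, Real.sqrt_sq (by positivity)]
  calc ‖Mod.jumpTerm Lk φ ψ‖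
      ≤ ∑' k, ‖Mod.rankOne (Lk k φ) (Lk k ψ)‖ :=
        norm_tsum_le_tsum_norm (Mod.summable_norm_rankOne hL φ ψ)
    _ = ∑' k, ‖Lk k φ‖ * ‖Lk k ψ‖ := by simp only [Mod.norm_rankOne]
    _ ≤ √(∑' k, ‖Lk k φ‖ ^ 2) * √(∑' k, ‖Lk k ψ‖ ^ 2) :=
        (Real.tsum_mul_le_sqrt_mul_sqrt (fun _ => norm_nonneg _) (fun _ => norm_nonneg _)
          (hL φ).1 (hL ψ).1).2
    _ ≤ √(C * ‖M.graphMap φ‖ ^ 2) * √(C * ‖M.graphMap ψ‖ ^ 2) := by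
      gcongr
      · exact (hL φ).2
      · exact (hL ψ).2
    _ = C * ‖M.graphMap φ‖ * ‖M.graphMap ψ‖ := hsqrt

variable [CompleteSpace T]

lemma jumpTerm_sub_left (φ φ' ψ : M.domain) :
    Mod.jumpTerm Lk (φ - φ') ψ = Mod.jumpTerm Lk φ ψ - Mod.jumpTerm Lk φ' ψ := by
  simp only [jumpTerm, map_sub, rankOne_sub_left]
  exact (Mod.summable_norm_rankOne hL φ ψ).of_norm.tsum_sub
    (Mod.summable_norm_rankOne hL φ' ψ).of_norm

lemma jumpTerm_sub_right (φ ψ ψ' : M.domain) :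
    Mod.jumpTerm Lk φ (ψ - ψ') = Mod.jumpTerm Lk φ ψ - Mod.jumpTerm Lk φ ψ' := by
  simp only [jumpTerm, map_sub, rankOne_sub_right]
  exact (Mod.summable_norm_rankOne hL φ ψ).of_norm.tsum_sub
    (Mod.summable_norm_rankOne hL φ ψ').of_norm

variable (hC : 0 ≤ C) {α : Type*} {l : Filter α} {x y : α → M.domain} {φ ψ : M.domain}
  (hx : Tendsto (fun j => M.graphMap (x j)) l (𝓝 (M.graphMap φ)))
  (hy : Tendsto (fun j => M.graphMap (y j)) l (𝓝 (M.graphMap ψ)))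
include hC hx hy

lemma tendsto_jumpTerm :
    Tendsto (fun j => Mod.jumpTerm Lk (x j) (y j)) l (𝓝 (Mod.jumpTerm Lk φ ψ)) := by
  have hbound : ∀ j, ‖Mod.jumpTerm Lk (x j) (y j) - Mod.jumpTerm Lk φ ψ‖
      ≤ C * ‖M.graphMap (x j) - M.graphMap φ‖ * ‖M.graphMap (y j)‖
        + C * ‖M.graphMap φ‖ * ‖M.graphMap (y j) - M.graphMap ψ‖ := by
    intro j
    have hsplit : Mod.jumpTerm Lk (x j) (y j) - Mod.jumpTerm Lk φ ψ
        = Mod.jumpTerm Lk (x j - φ) (y j) + Mod.jumpTerm Lk φ (y j - ψ) := by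
      rw [Mod.jumpTerm_sub_left hL, Mod.jumpTerm_sub_right hL]; abel
    rw [hsplit, ← map_sub, ← map_sub]
    exact (norm_add_le _ _).trans
      (add_le_add (Mod.norm_jumpTerm_le hL hC _ _) (Mod.norm_jumpTerm_le hL hC _ _))
  rw [tendsto_iff_norm_sub_tendsto_zero] at hx ⊢
  refine squeeze_zero (fun _ => norm_nonneg _) hbound ?_
  simpa using ((hx.const_mul C).mul hy.norm).add
    ((tendsto_iff_norm_sub_tendsto_zero.1 hy).const_mul (C * ‖M.graphMap φ‖))

lemma tendsto_lindbladTerm :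
    Tendsto (fun j => Mod.lindbladTerm Lk (x j) (y j)) l (𝓝 (Mod.lindbladTerm Lk φ ψ)) :=
  ((Mod.tendsto_jumpTerm hL hC hx hy).sub (Mod.tendsto_rankOne hx.snd_nhds hy.fst_nhds)).sub
    (Mod.tendsto_rankOne hx.fst_nhds hy.snd_nhds)

end

end TraceClassModel

theorem matrixNormal_of_generalized_standard_form_general [TopologicalSpace.SeparableSpace H]
    (S : QDS Mod) (G : S.Generator)
    (M : H →ₗ.[ℂ] H) (hdense : Dense (M.domain : Set H))
    (Lk : ℕ → M.domain →ₗ[ℂ] H)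
    (hform : ∀ (N : ℕ) (φ ψ : Fin N → M.domain),
      (∑ n, Mod.rankOne (φ n) (ψ n)) ∈ G.Dom ∧
      G.L (∑ n, Mod.rankOne (φ n) (ψ n)) =
        ∑ n, ((∑' k, Mod.rankOne (Lk k (φ n)) (Lk k (ψ n)))
          - Mod.rankOne (M (φ n)) (ψ n) - Mod.rankOne (φ n) (M (ψ n))))
    (hcore : IsCoreFor G.L G.Dom
      {ρ : T | ∃ (N : ℕ) (φ ψ : Fin N → M.domain), ρ = ∑ n, Mod.rankOne (φ n) (ψ n)})
    (hnormsq : ∀ φ : M.domain, (Summable fun k => ‖Lk k φ‖ ^ 2) ∧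
      ∑' k, ‖Lk k φ‖ ^ 2 = 2 * (⟪(φ : H), M φ⟫_ℂ).re) :
    ∃ (ι : Type) (_ : Countable ι) (e : ι → H), G.MatrixNormal e := by
  have hL : ∀ φ, Summable (fun k => ‖Lk k φ‖ ^ 2) ∧
      ∑' k, ‖Lk k φ‖ ^ 2 ≤ 2 * ‖M.graphMap φ‖ ^ 2 := fun φ =>
    ⟨(hnormsq φ).1, (hnormsq φ).2 ▸ by gcongr; exact M.re_inner_le_norm_graphMap_sq φ⟩
  obtain ⟨u, hu⟩ := M.exists_seq_tendsto_graphMap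
  obtain ⟨ι, hι, e, he, hspan⟩ := exists_orthonormal_span_range_eq ℂ fun n => (u n : H)
  have hu_span : ∀ n, (u n : H) ∈ Submodule.span ℂ (range e) :=
    fun n => hspan ▸ Submodule.subset_span (mem_range_self n)
  have he_dom : ∀ i, e i ∈ M.domain := fun i =>
    Submodule.span_le.2 (range_subset_iff.2 fun n => (u n).2)
      (hspan ▸ Submodule.subset_span (mem_range_self i))
  have hdom_closure : (M.domain : Set H) ⊆ closure (Submodule.span ℂ (range e)) := fun φ hφ =>
    have ⟨a, ha⟩ := hu ⟨φ, hφ⟩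
    mem_closure_of_tendsto ha.fst_nhds (Eventually.of_forall fun j => hu_span (a j))
  refine ⟨ι, hι, e, ⟨he, dense_closure.1 (hdense.mono hdom_closure)⟩,
    hcore.of_tendsto ((Mod.De2_subset_sums_rankOne M.domain he_dom).trans hcore.1) ?_⟩
  rintro _ ⟨N, φ, ψ, rfl⟩
  choose a ha using fun n => hu (φ n)
  choose b hb using fun n => hu (ψ n)
  refine ⟨fun j => ∑ n, Mod.rankOne (u (a n j)) (u (b n j)),
    fun j => Submodule.sum_mem _ fun n _ => Mod.rankOne_mem_De2 (hu_span _) (hu_span _),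
    tendsto_finsetSum _ fun n _ => Mod.tendsto_rankOne (ha n).fst_nhds (hb n).fst_nhds, ?_⟩
  have hLu : ∀ j, G.L (∑ n, Mod.rankOne (u (a n j)) (u (b n j)))
      = ∑ n, Mod.lindbladTerm Lk (u (a n j)) (u (b n j)) :=
    fun j => (hform N (fun n => u (a n j)) (fun n => u (b n j))).2
  rw [funext hLu, (hform N φ ψ).2]
  exact tendsto_finsetSum _ fun n _ => Mod.tendsto_lindbladTerm hL zero_le_two (ha n) (hb n)

/-- Theorem 1, second half: if the generator `L` of a trace-preserving
QDS is in generalized standard form — with `M` closed, densely defined, generating a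
contraction semigroup, operators `L_k` on `D(M)` relatively bounded w.r.t. `M`,
`L(ρ) = ∑_k L_k ρ L_k† − Mρ − ρM†` on the core `D_0` of finite-rank operators built from
`D(M)`, and `∑_k ‖L_k φ‖² = 2 Re⟨φ, Mφ⟩` — then the QDS is matrix normal: there is an
orthonormal basis `{e_k}` of `H` such that `D_e²` is a core for `L`. -/
theorem matrixNormal_of_generalized_standard_form [TopologicalSpace.SeparableSpace H]
    (S : QDS Mod) (G : S.Generator)
    (M : H →ₗ.[ℂ] H) (hdense : Dense (M.domain : Set H)) (hclosed : M.IsClosed)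
    (hgen : GeneratesContractionSemigroupPMap M)
    (Lk : ℕ → M.domain →ₗ[ℂ] H)
    (hrb : ∀ k, ∃ a b : ℝ, ∀ φ : M.domain, ‖Lk k φ‖ ≤ a * ‖(φ : H)‖ + b * ‖M φ‖)
    (hSumm : ∀ φ ψ : M.domain, Summable fun k => Mod.rankOne (Lk k φ) (Lk k ψ))
    (hform : ∀ (N : ℕ) (φ ψ : Fin N → M.domain),
      (∑ n, Mod.rankOne (φ n) (ψ n)) ∈ G.Dom ∧
      G.L (∑ n, Mod.rankOne (φ n) (ψ n)) =
        ∑ n, ((∑' k, Mod.rankOne (Lk k (φ n)) (Lk k (ψ n)))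
          - Mod.rankOne (M (φ n)) (ψ n) - Mod.rankOne (φ n) (M (ψ n))))
    (hcore : IsCoreFor G.L G.Dom
      {ρ : T | ∃ (N : ℕ) (φ ψ : Fin N → M.domain), ρ = ∑ n, Mod.rankOne (φ n) (ψ n)})
    (hnormsq : ∀ φ : M.domain, (Summable fun k => ‖Lk k φ‖ ^ 2) ∧
      ∑' k, ‖Lk k φ‖ ^ 2 = 2 * (⟪(φ : H), M φ⟫_ℂ).re) :
    ∃ (ι : Type) (_ : Countable ι) (e : ι → H), G.MatrixNormal e :=
  matrixNormal_of_generalized_standard_form_general S G M hdense Lk hform hcore hnormsq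

end
end

section
/- Let L be the generator of a trace-preserving quantum dynamical semigroup on 𝔗(H), let M be an operator with dense domain D(M) ⊇ D_e and let (L_k) be a countable family of operators defined on D_e such that L(ρ) = Σ_k L_k ρ L_k† − Mρ − ρM† for all ρ ∈ D_e², where D_e² ⊆ D(L). Then for every φ ∈ D_e one has Σ_k ‖L_k φ‖² = ⟨φ, Mφ⟩ + ⟨Mφ, φ⟩ = 2 Re⟨φ, Mφ⟩; in particular the sum Σ_k ‖L_k φ‖² is finite. -/
/-! Since every `T^t` preserves the trace, the trace of `L(ρ)` vanishes for every `ρ` in the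
domain of the generator. Taking the trace of
`L(|φ⟩⟨φ|) = ∑_k |L_k φ⟩⟨L_k φ| - |Mφ⟩⟨φ| - |φ⟩⟨Mφ|` with `tr |x⟩⟨y| = ⟪y, x⟫` then gives
`∑_k ‖L_k φ‖² = ⟪φ, Mφ⟫ + ⟪Mφ, φ⟫`, the series converging because the trace is continuous. -/

open Filter Set
open scoped InnerProductSpace ComplexConjugate ComplexOrder Topology ComplexInnerProductSpace

noncomputable section

variable {H T : Type*}

variable [NormedAddCommGroup H] [InnerProductSpace ℂ H] [CompleteSpace H]
  [NormedAddCommGroup T] [NormedSpace ℂ T] [CompleteSpace T]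

variable {Mod : TraceClassModel H T}

section

variable {E F : Type*} [AddCommGroup E] [Module ℂ E] [TopologicalSpace E]
  [AddCommGroup F] [Module ℂ F] [TopologicalSpace F] [T2Space F]

theorem ContinuousLinearMap.map_eq_zero_of_tendsto_slope (f : E →L[ℂ] F) {u : ℝ → E}
    {x σ : E} (hf : ∀ᶠ t in 𝓝[>] 0, f (u t) = f x)
    (hσ : Tendsto (fun t : ℝ => (t : ℂ)⁻¹ • (u t - x)) (𝓝[>] 0) (𝓝 σ)) : f σ = 0 := by
  refine tendsto_nhds_unique ((f.continuous.tendsto σ).comp hσ) (tendsto_const_nhds.congr' ?_)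
  filter_upwards [hf] with t ht
  simp [ht]

end

omit [CompleteSpace H] [CompleteSpace T] in
theorem QDS.trace_eq_zero_of_hasGenDerivAt (S : QDS Mod) {ρ σ : T}
    (h : S.HasGenDerivAt ρ σ) : Mod.trace σ = 0 :=
  Mod.trace.map_eq_zero_of_tendsto_slope
    (eventually_nhdsWithin_of_forall fun t ht => S.trace_preserving t (le_of_lt ht) ρ) h

omit [CompleteSpace H] [CompleteSpace T] in
theorem TraceClassModel.hasSum_norm_sq_trace_tsum (Mod : TraceClassModel H T) {ι : Type*}
    {x : ι → H} (h : Summable fun k => Mod.rankOne (x k) (x k)) :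
    HasSum (fun k => ((‖x k‖ ^ 2 : ℝ) : ℂ)) (Mod.trace (∑' k, Mod.rankOne (x k) (x k))) := by
  convert Mod.trace.hasSum h.hasSum using 1
  funext k
  simp [Mod.trace_rankOne]

theorem sum_norm_sq_eq_twice_re_inner_general
    (S : QDS Mod) (G : S.Generator) {ι : Type*} (e : ι → H)
    (M : H →ₗ.[ℂ] H)
    (hDe : Submodule.span ℂ (Set.range e) ≤ M.domain)
    (Lk : ℕ → (Submodule.span ℂ (Set.range e) : Submodule ℂ H) →ₗ[ℂ] H)
    (hSumm : ∀ φ ψ : Submodule.span ℂ (Set.range e),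
      Summable fun k => Mod.rankOne (Lk k φ) (Lk k ψ))
    (hform : ∀ φ ψ : Submodule.span ℂ (Set.range e),
      Mod.rankOne (φ : H) (ψ : H) ∈ G.Dom ∧
      G.L (Mod.rankOne (φ : H) (ψ : H)) =
        (∑' k, Mod.rankOne (Lk k φ) (Lk k ψ))
          - Mod.rankOne (M ⟨(φ : H), hDe φ.2⟩) (ψ : H)
          - Mod.rankOne (φ : H) (M ⟨(ψ : H), hDe ψ.2⟩)) :
    ∀ φ : Submodule.span ℂ (Set.range e),
      (Summable fun k => ‖Lk k φ‖ ^ 2) ∧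
      ∑' k, ‖Lk k φ‖ ^ 2 = 2 * (⟪(φ : H), M ⟨(φ : H), hDe φ.2⟩⟫_ℂ).re ∧
      ((∑' k, ‖Lk k φ‖ ^ 2 : ℝ) : ℂ) =
        ⟪(φ : H), M ⟨(φ : H), hDe φ.2⟩⟫_ℂ + ⟪M ⟨(φ : H), hDe φ.2⟩, (φ : H)⟫_ℂ := by
  intro φ
  set Mφ := M ⟨(φ : H), hDe φ.2⟩
  obtain ⟨hmem, hL⟩ := hform φ φ
  have htrace : Mod.trace (∑' k, Mod.rankOne (Lk k φ) (Lk k φ)) =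
      ⟪(φ : H), Mφ⟫_ℂ + conj ⟪(φ : H), Mφ⟫_ℂ := by
    have h0 := S.trace_eq_zero_of_hasGenDerivAt (G.hasGenDerivAt _ hmem)
    rw [hL, map_sub, map_sub, Mod.trace_rankOne, Mod.trace_rankOne, sub_sub, sub_eq_zero] at h0
    rw [h0, inner_conj_symm]
  have hsum : HasSum (fun k => ‖Lk k φ‖ ^ 2) (2 * (⟪(φ : H), Mφ⟫_ℂ).re) := by
    rw [← Complex.hasSum_ofReal, ← Complex.add_conj, ← htrace]
    exact Mod.hasSum_norm_sq_trace_tsum (hSumm φ φ)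
  refine ⟨hsum.summable, hsum.tsum_eq, ?_⟩
  rw [hsum.tsum_eq, ← Complex.add_conj, inner_conj_symm]

/-- proof of Equation (4): if the generator `L` of a trace-preserving QDS
satisfies `L(ρ) = ∑_k L_k ρ L_k† − Mρ − ρM†` for all `ρ ∈ D_e²` (with `D_e² ⊆ D(L)`,
`M` densely defined with `D_e ⊆ D(M)`, and `L_k` defined on `D_e`), then for every
`φ ∈ D_e` the sum `∑_k ‖L_k φ‖²` is finite and equals
`⟨φ, Mφ⟩ + ⟨Mφ, φ⟩ = 2 Re⟨φ, Mφ⟩`. -/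
theorem sum_norm_sq_eq_twice_re_inner [TopologicalSpace.SeparableSpace H]
    (S : QDS Mod) (G : S.Generator) {ι : Type*} (e : ι → H) (he : IsONBasis e)
    (M : H →ₗ.[ℂ] H) (hdense : Dense (M.domain : Set H))
    (hDe : Submodule.span ℂ (Set.range e) ≤ M.domain)
    (Lk : ℕ → (Submodule.span ℂ (Set.range e) : Submodule ℂ H) →ₗ[ℂ] H)
    (hSumm : ∀ φ ψ : Submodule.span ℂ (Set.range e),
      Summable fun k => Mod.rankOne (Lk k φ) (Lk k ψ))
    (hform : ∀ φ ψ : Submodule.span ℂ (Set.range e),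
      Mod.rankOne (φ : H) (ψ : H) ∈ G.Dom ∧
      G.L (Mod.rankOne (φ : H) (ψ : H)) =
        (∑' k, Mod.rankOne (Lk k φ) (Lk k ψ))
          - Mod.rankOne (M ⟨(φ : H), hDe φ.2⟩) (ψ : H)
          - Mod.rankOne (φ : H) (M ⟨(ψ : H), hDe ψ.2⟩)) :
    ∀ φ : Submodule.span ℂ (Set.range e),
      (Summable fun k => ‖Lk k φ‖ ^ 2) ∧
      ∑' k, ‖Lk k φ‖ ^ 2 = 2 * (⟪(φ : H), M ⟨(φ : H), hDe φ.2⟩⟫_ℂ).re ∧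
      ((∑' k, ‖Lk k φ‖ ^ 2 : ℝ) : ℂ) =
        ⟪(φ : H), M ⟨(φ : H), hDe φ.2⟩⟫_ℂ + ⟪M ⟨(φ : H), hDe φ.2⟩, (φ : H)⟫_ℂ :=
  sum_norm_sq_eq_twice_re_inner_general S G e M hDe Lk hSumm hform

end
end

section
/- Let M be a closed densely defined linear operator on a separable complex Hilbert space H. Then there exists an orthonormal basis {e_k} of H with e_k ∈ D(M) for all k, such that the finite linear span D_e of {e_k} is a core for M: for every φ ∈ D(M) and ε > 0 there is e ∈ D_e with ‖φ − e‖ ≤ ε and ‖Mφ − Me‖ ≤ ε. -/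
/-!
The graph of `M` is a subset of the separable metric space `H × H`, so it has a countable
dense subset; its first coordinates form a countable set `T ⊆ D(M)` approximating every
`φ ∈ D(M)` in graph norm. Gram–Schmidt turns an enumeration of `T` into an orthonormal family
with the same span, and that span is dense in `H` because `D(M)` is.
-/

open Set Submodule InnerProductSpace

theorem Set.range_restrict_ne_zero {α M : Type*} [Zero M] (g : α → M) :
    range (fun i : {i | g i ≠ 0} => g i) = range g \ {0} := by
  ext x
  aesop

theorem Set.Countable.exists_orthonormal_span_eq {𝕜 E : Type*} [RCLike 𝕜]
    [NormedAddCommGroup E] [InnerProductSpace 𝕜 E] {T : Set E} (hT : T.Countable) :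
    ∃ (ι : Type) (_ : Countable ι) (e : ι → E),
      Orthonormal 𝕜 e ∧ span 𝕜 (range e) = span 𝕜 T := by
  obtain ⟨f, hf⟩ := (hT.insert 0).exists_eq_range (insert_nonempty 0 T)
  refine ⟨{n | gramSchmidtNormed 𝕜 f n ≠ 0}, inferInstance, _,
    gramSchmidtNormed_orthonormal' f, ?_⟩
  rw [Set.range_restrict_ne_zero, span_sdiff_singleton_zero, span_gramSchmidtNormed_range,
    span_gramSchmidt, ← hf, span_insert_zero]

theorem LinearPMap.exists_countable_approx_graph {R E F : Type*} [Ring R]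
    [SeminormedAddCommGroup E] [Module R E] [SeminormedAddCommGroup F] [Module R F]
    [TopologicalSpace.SeparableSpace E] [TopologicalSpace.SeparableSpace F] (f : E →ₗ.[R] F) :
    ∃ T : Set E, T.Countable ∧ T ⊆ f.domain ∧ ∀ (φ : f.domain) (ε : ℝ), 0 < ε →
      ∃ x : f.domain, (x : E) ∈ T ∧ ‖(φ : E) - x‖ ≤ ε ∧ ‖f φ - f x‖ ≤ ε := by
  have : SecondCountableTopology (E × F) := UniformSpace.secondCountable_of_separable _
  obtain ⟨D, hDcount, hDdense⟩ :=
    TopologicalSpace.exists_countable_dense (f.graph : Set (E × F))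
  refine ⟨(fun q : f.graph => (q : E × F).1) '' D, hDcount.image _, ?_, ?_⟩
  · rintro _ ⟨q, -, rfl⟩
    exact f.mem_domain_of_mem_graph q.2
  · intro φ ε hε
    obtain ⟨q, hq, hqD⟩ := Metric.dense_iff.mp hDdense ⟨_, f.mem_graph φ⟩ ε hε
    obtain ⟨x, hx₁, hx₂⟩ := f.mem_graph_iff.mp q.2
    have hdist : dist ((φ : E), f φ) (q : E × F) < ε := by
      rwa [Metric.mem_ball, Subtype.dist_eq, dist_comm] at hq
    rw [Prod.dist_eq, max_lt_iff, ← hx₁, ← hx₂, dist_eq_norm, dist_eq_norm] at hdist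
    exact ⟨x, hx₁ ▸ ⟨q, hqD, rfl⟩, hdist.1.le, hdist.2.le⟩

theorem exists_orthonormalBasis_core_general {H : Type*} [NormedAddCommGroup H]
    [InnerProductSpace ℂ H] [TopologicalSpace.SeparableSpace H]
    (M : H →ₗ.[ℂ] H) (hdense : Dense (M.domain : Set H)) :
    ∃ (ι : Type) (_ : Countable ι) (e : ι → H),
      Orthonormal ℂ e ∧
      Dense ((Submodule.span ℂ (Set.range e) : Submodule ℂ H) : Set H) ∧
      (∀ i, e i ∈ M.domain) ∧
      ∀ (φ : M.domain) (ε : ℝ), 0 < ε → ∃ x : M.domain,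
        (x : H) ∈ Submodule.span ℂ (Set.range e) ∧
        ‖(φ : H) - (x : H)‖ ≤ ε ∧ ‖M φ - M x‖ ≤ ε := by
  obtain ⟨T, hTcount, hTdomain, hTapprox⟩ := M.exists_countable_approx_graph
  obtain ⟨ι, hι, e, he, hspan⟩ := hTcount.exists_orthonormal_span_eq (𝕜 := ℂ)
  have hdomain : (M.domain : Set H) ⊆ closure (span ℂ T) := by
    intro φ hφ
    refine Metric.mem_closure_iff.mpr fun ε hε => ?_
    obtain ⟨x, hxT, hx, -⟩ := hTapprox ⟨φ, hφ⟩ (ε / 2) (half_pos hε)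
    exact ⟨x, subset_span hxT, (dist_eq_norm φ x).trans_lt (hx.trans_lt (half_lt_self hε))⟩
  refine ⟨ι, hι, e, he, ?_, fun i => ?_, fun φ ε hε => ?_⟩
  · rw [hspan]
    exact dense_closure.mp (hdense.mono hdomain)
  · exact span_le.mpr hTdomain (hspan ▸ subset_span (mem_range_self i))
  · obtain ⟨x, hxT, hx⟩ := hTapprox φ ε hε
    exact ⟨x, hspan ▸ subset_span hxT, hx⟩

/-- every closed densely defined operator `M` on a separable complex
Hilbert space admits an orthonormal basis `{e_k}` contained in `D(M)` whose finite linear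
span `D_e` is a core for `M`: every `φ ∈ D(M)` is approximated in graph norm by elements
of `D_e`. -/
theorem exists_orthonormalBasis_core {H : Type*} [NormedAddCommGroup H]
    [InnerProductSpace ℂ H] [CompleteSpace H] [TopologicalSpace.SeparableSpace H]
    (M : H →ₗ.[ℂ] H) (hdense : Dense (M.domain : Set H)) (hclosed : M.IsClosed) :
    ∃ (ι : Type) (_ : Countable ι) (e : ι → H),
      Orthonormal ℂ e ∧
      Dense ((Submodule.span ℂ (Set.range e) : Submodule ℂ H) : Set H) ∧
      (∀ i, e i ∈ M.domain) ∧
      ∀ (φ : M.domain) (ε : ℝ), 0 < ε → ∃ x : M.domain,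
        (x : H) ∈ Submodule.span ℂ (Set.range e) ∧
        ‖(φ : H) - (x : H)‖ ≤ ε ∧ ‖M φ - M x‖ ≤ ε :=
  exists_orthonormalBasis_core_general M hdense
end

section
/- Let H be a separable complex Hilbert space with orthonormal bases {e_n} and {f_n}, and let D_e, D_f be their finite linear spans. Let Q assign to each element of D_e² (the span of the matrix units |e_k⟩⟨e_ℓ|) a quadratic form with form domain D_f, linearly in the matrix units, and assume Q is completely positive: for every finitely supported family of complex coefficients c_{i,k}, Σ_{i,k,j,ℓ} c_{i,k}* c_{j,ℓ} ⟨f_i|Q(|e_k⟩⟨e_ℓ|)|f_j⟩ ≥ 0. Then there exists a countable family of generalized Kraus operators K_α (linear maps from D_e to the algebraic conjugate dual of D_f) such that ⟨f_i|Q(|e_k⟩⟨e_ℓ|)|f_j⟩ = Σ_α ⟨f_i|K_α|e_k⟩ · ⟨f_j|K_α|e_ℓ⟩* for all i, j, k, ℓ, that is, Q(ρ) = Σ_α K_α ρ K_α† on D_e². -/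
/-!
Flattening the index pairs, complete positivity says that `M (i, k) (j, l) = q i j k l` is a
positive semidefinite kernel on `ℕ × ℕ` (over `ℂ`, nonnegativity of the quadratic form already
forces `M` to be Hermitian). Its reproducing kernel Hilbert space realises `M` as a Gram matrix,
`M x y = ⟪v x, v y⟫`. Gram–Schmidt applied to the sequence `v ∘ Nat.unpair` gives orthogonal
vectors `b α`, each of norm `0` or `1`, with `v (i, k)` in the span of the `b α` for
`α ≤ Nat.pair i k`. Hence `⟪v x, v y⟫ = ∑ α, ⟪v x, b α⟫ ⟪b α, v y⟫` is a finite sum, and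
`K α i k = ⟪v (i, k), b α⟫` are the Kraus operators.
-/

open scoped ComplexConjugate ComplexOrder
open InnerProductSpace

universe u v

section GramSchmidt

variable {𝕜 E ι : Type*} [RCLike 𝕜] [NormedAddCommGroup E] [InnerProductSpace 𝕜 E]
  [LinearOrder ι] [LocallyFiniteOrderBot ι] [WellFoundedLT ι]

local notation "⟪" x ", " y "⟫" => inner 𝕜 x y

theorem inner_gramSchmidtNormed_sum_inner_smul (f : ι → E) {s : Finset ι} {j : ι} (hj : j ∈ s)
    (x : E) :
    ⟪gramSchmidtNormed 𝕜 f j, ∑ i ∈ s, ⟪gramSchmidtNormed 𝕜 f i, x⟫ • gramSchmidtNormed 𝕜 f i⟫ =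
      ⟪gramSchmidtNormed 𝕜 f j, x⟫ := by
  rw [inner_sum, Finset.sum_eq_single_of_mem j hj fun i _ hij => ?_, inner_smul_right]
  · by_cases hb : gramSchmidtNormed 𝕜 f j = 0
    · simp [hb]
    · rw [inner_self_eq_norm_sq_to_K, gramSchmidtNormed_unit_length' hb]
      simp
  · simp [gramSchmidtNormed, inner_smul_left, inner_smul_right,
      gramSchmidt_orthogonal 𝕜 f hij.symm]

theorem inner_gramSchmidtNormed_eq_zero_of_lt (f : ι → E) {i j : ι} (hij : i < j) :
    ⟪f i, gramSchmidtNormed 𝕜 f j⟫ = 0 := by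
  rw [inner_eq_zero_symm]
  simp [gramSchmidtNormed, inner_smul_left, gramSchmidt_inv_triangular 𝕜 f hij]

theorem inner_eq_sum_inner_gramSchmidtNormed_mul_inner (f : ι → E) (i : ι) (x : E) :
    ⟪f i, x⟫ =
      ∑ j ∈ Finset.Iic i, ⟪f i, gramSchmidtNormed 𝕜 f j⟫ * ⟪gramSchmidtNormed 𝕜 f j, x⟫ := by
  set b := gramSchmidtNormed 𝕜 f
  set y := x - ∑ j ∈ Finset.Iic i, ⟪b j, x⟫ • b j
  have hy : ∀ j ∈ Finset.Iic i, ⟪b j, y⟫ = 0 := fun j hj => by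
    rw [inner_sub_right, inner_gramSchmidtNormed_sum_inner_smul f hj, sub_self]
  have hfi : f i ∈ (𝕜 ∙ y)ᗮ := by
    have hspan : f i ∈ Submodule.span 𝕜 (b '' Set.Iic i) := by
      rw [span_gramSchmidtNormed]
      exact mem_span_gramSchmidt 𝕜 f le_rfl
    refine Submodule.span_le.2 ?_ hspan
    rintro _ ⟨j, hj, rfl⟩
    rw [SetLike.mem_coe, Submodule.mem_orthogonal_singleton_iff_inner_right, inner_eq_zero_symm]
    exact hy j (Finset.mem_Iic.2 hj)
  rw [Submodule.mem_orthogonal_singleton_iff_inner_right, inner_eq_zero_symm, inner_sub_right,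
    sub_eq_zero, inner_sum] at hfi
  rw [hfi]
  simp only [inner_smul_right, mul_comm]

theorem hasSum_inner_gramSchmidtNormed_mul_inner (f : ι → E) (i : ι) (x : E) :
    HasSum (fun j => ⟪f i, gramSchmidtNormed 𝕜 f j⟫ * ⟪gramSchmidtNormed 𝕜 f j, x⟫) ⟪f i, x⟫ := by
  rw [inner_eq_sum_inner_gramSchmidtNormed_mul_inner f i x]
  refine hasSum_sum_of_ne_finset_zero fun j hj => ?_
  rw [Finset.mem_Iic, not_le] at hj
  rw [inner_gramSchmidtNormed_eq_zero_of_lt f hj, zero_mul]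

end GramSchmidt

theorem Matrix.isHermitian_of_forall_sum_nonneg {ι : Type*} {M : Matrix ι ι ℂ}
    (hM : ∀ (s : Finset ι) (c : ι → ℂ), 0 ≤ ∑ p ∈ s, ∑ r ∈ s, conj (c p) * c r * M p r) :
    M.IsHermitian := by
  classical
  have diag (m : ι) : (M m m).im = 0 := by
    simpa [eq_comm] using (Complex.le_def.1 (hM {m} 1)).2
  ext m n
  rw [Matrix.conjTranspose_apply, Complex.star_def]
  rcases eq_or_ne n m with rfl | hnm
  · exact Complex.conj_eq_iff_im.2 (diag n)
  have pair (b : ℂ) := (Complex.le_def.1 (hM {m, n} fun p => if p = m then 1 else b)).2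
  have h₁ := pair 1
  have h₂ := pair Complex.I
  simp only [Complex.zero_im, ite_self, map_one, mul_one, one_mul, Finset.sum_pair hnm.symm,
    Complex.add_im, diag, zero_add, add_zero, mul_ite, ite_mul, ↓reduceIte, hnm, Complex.conj_I,
    neg_mul, Complex.I_mul_I, neg_neg, Complex.mul_im, Complex.I_re, zero_mul, Complex.I_im,
    Complex.neg_im] at h₁ h₂
  apply Complex.ext <;> simp <;> linarith

theorem Matrix.posSemidef_of_forall_sum_nonneg {ι : Type*} {M : Matrix ι ι ℂ}
    (hM : ∀ (s : Finset ι) (c : ι → ℂ), 0 ≤ ∑ p ∈ s, ∑ r ∈ s, conj (c p) * c r * M p r) :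
    M.PosSemidef :=
  ⟨Matrix.isHermitian_of_forall_sum_nonneg hM, fun x => by
    simpa only [Finsupp.sum, Complex.star_def, mul_right_comm] using hM x.support x⟩

theorem Matrix.PosSemidef.map_smul_one {𝕜 : Type*} [RCLike 𝕜] {X : Type*} {M : Matrix X X 𝕜}
    (hM : M.PosSemidef) : (M.map (· • 1 : 𝕜 → 𝕜 →L[𝕜] 𝕜)).PosSemidef := by
  have tfae := (RKHS.posSemidef_tfae (K := M.map (· • 1 : 𝕜 → 𝕜 →L[𝕜] 𝕜))).out 0 2
  refine tfae.2 ⟨hM.1.map _ fun z => by simp [star_smul], fun w => ?_⟩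
  convert (RCLike.nonneg_iff.1 (hM.2 w)).1 using 2
  refine Finsupp.sum_congr fun x _ => Finsupp.sum_congr fun x' _ => ?_
  simp [RCLike.inner_apply, ← hM.1.apply x x']
  ring

theorem Matrix.PosSemidef.exists_gram_eq {𝕜 : Type u} [RCLike 𝕜] {X : Type v}
    {M : Matrix X X 𝕜} (hM : M.PosSemidef) :
    ∃ (E : Type (max u v)) (_ : NormedAddCommGroup E) (_ : InnerProductSpace 𝕜 E) (w : X → E),
      Matrix.gram 𝕜 w = M := by
  set K := M.map (· • 1 : 𝕜 → 𝕜 →L[𝕜] 𝕜)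
  have : Fact K.PosSemidef := ⟨hM.map_smul_one⟩
  -- instance search does not unfold the abbreviation `RKHS.OfKernel`
  let _ : InnerProductSpace 𝕜 (RKHS.OfKernel K) := UniformSpace.Completion.innerProductSpace
  refine ⟨RKHS.OfKernel K, inferInstance, inferInstance, fun x => RKHS.kerFun _ x 1, ?_⟩
  ext x y
  have := RKHS.kernel_inner (RKHS.OfKernel K) y x (1 : 𝕜) 1
  rw [RKHS.OfKernel.kernel_ofKernel] at this
  simp [Matrix.gram_apply, ← this, K, RCLike.inner_apply, ← hM.1.apply x y]

/-- Theorem 2, generalized Kraus operators: let `Q` be a completely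
positive map from `D_e²` into the quadratic forms with form domain `D_f`, on a separable
Hilbert space with orthonormal bases `{e_n}`, `{f_n}`. `Q` is determined by its matrix
elements `q i j k l = ⟨f_i|Q(|e_k⟩⟨e_ℓ|)|f_j⟩`, and a generalized operator `K` (a linear
map from `D_e` to the algebraic conjugate dual of `D_f`) by its matrix elements
`⟨f_i|K|e_k⟩`. Complete positivity says `∑ c_{i,k}* c_{j,ℓ} q i j k l ≥ 0` for all
finitely supported coefficients; the conclusion is a countable family of generalized Kraus
operators `K_α` with `⟨f_i|Q(|e_k⟩⟨e_ℓ|)|f_j⟩ = ∑_α ⟨f_i|K_α|e_k⟩ ⟨f_j|K_α|e_ℓ⟩*`,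
i.e. `Q(ρ) = ∑_α K_α ρ K_α†` on `D_e²`. -/
theorem exists_generalized_kraus_operators (q : ℕ → ℕ → ℕ → ℕ → ℂ)
    (hcp : ∀ (s : Finset (ℕ × ℕ)) (c : ℕ × ℕ → ℂ),
      0 ≤ ∑ p ∈ s, ∑ r ∈ s, conj (c p) * c r * q p.1 r.1 p.2 r.2) :
    ∃ K : ℕ → ℕ → ℕ → ℂ,
      ∀ i j k l : ℕ,
        (Summable fun α => K α i k * conj (K α j l)) ∧
        q i j k l = ∑' α, K α i k * conj (K α j l) := by
  obtain ⟨E, _, _, v, hv⟩ := (Matrix.posSemidef_of_forall_sum_nonneg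
    (M := .of fun p r : ℕ × ℕ => q p.1 r.1 p.2 r.2) hcp).exists_gram_eq
  set b := gramSchmidtNormed ℂ (v ∘ Nat.unpair)
  refine ⟨fun α i k => ⟪v (i, k), b α⟫_ℂ, fun i j k l => ?_⟩
  have hq : q i j k l = ⟪v (i, k), v (j, l)⟫_ℂ := by
    rw [← Matrix.gram_apply, hv]
    rfl
  have key :=
    hasSum_inner_gramSchmidtNormed_mul_inner (𝕜 := ℂ) (v ∘ Nat.unpair) (Nat.pair i k) (v (j, l))
  simp only [Function.comp_apply, Nat.unpair_pair] at key
  simp only [inner_conj_symm, hq]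
  exact ⟨key.summable, key.tsum_eq.symm⟩
end

section
/- Let H be a separable complex Hilbert space with orthonormal bases {e_n}, {f_n} and let Q be a completely positive map on D_e² with generalized Kraus representation ⟨f_i|Q(|e_k⟩⟨e_ℓ|)|f_j⟩ = Σ_α ⟨f_i|K_α|e_k⟩⟨f_j|K_α|e_ℓ⟩*. Assume moreover that for each φ ∈ D_e the quadratic form Q(|φ⟩⟨φ|) is given by a bounded operator on H, i.e., there is a bounded operator Q̆(|φ⟩⟨φ|) with ⟨ψ|Q(|φ⟩⟨φ|)|ψ⟩ = ⟨ψ, Q̆(|φ⟩⟨φ|)ψ⟩ for all ψ ∈ D_f. Then each K_α maps D_e into H: for every φ ∈ D_e the functional ψ ↦ ⟨ψ|K_α|φ⟩ is bounded on D_f, and Σ_α |⟨ψ|K_α|φ⟩|² ≤ ‖Q̆(|φ⟩⟨φ|)‖·‖ψ‖² for every ψ ∈ D_f; in particular ‖K_α φ‖² ≤ ‖Q̆(|φ⟩⟨φ|)‖ for ‖φ‖-normalized φ up to the factor ‖φ‖² in the obvious scaling. -/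
open scoped ComplexConjugate ComplexOrder InnerProductSpace ComplexInnerProductSpace

/-!
Expanding `|∑_p c_p K_α(p)|²` and summing over `α` turns the Kraus representation into the identity
`∑_α |⟨ψ|K_α|φ⟩|² = ⟨ψ|Q(|φ⟩⟨φ|)|ψ⟩ = ⟨ψ, Q̆(|φ⟩⟨φ|) ψ⟩`, and the right-hand side is at most
`‖Q̆(|φ⟩⟨φ|)‖ ‖ψ‖²`. Each single term of the series is then bounded by the whole sum.
-/

theorem ContinuousLinearMap.re_inner_self_apply_le {𝕜 E : Type*} [RCLike 𝕜] [NormedAddCommGroup E]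
    [InnerProductSpace 𝕜 E] (B : E →L[𝕜] E) (x : E) :
    RCLike.re (inner 𝕜 x (B x)) ≤ ‖B‖ * ‖x‖ ^ 2 :=
  calc RCLike.re (inner 𝕜 x (B x)) ≤ ‖inner 𝕜 x (B x)‖ := RCLike.re_le_norm _
    _ ≤ ‖x‖ * ‖B x‖ := norm_inner_le_norm _ _
    _ ≤ ‖x‖ * (‖B‖ * ‖x‖) := by gcongr; exact B.le_opNorm x
    _ = ‖B‖ * ‖x‖ ^ 2 := by ring

theorem hasSum_norm_sq_finset_sum_mul {ι : Type*} (K : ℕ → ι → ℂ)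
    (hK : ∀ p r, Summable fun α => K α p * conj (K α r)) (s : Finset ι) (c : ι → ℂ) :
    HasSum (fun α => ‖∑ p ∈ s, c p * K α p‖ ^ 2)
      (∑ p ∈ s, ∑ r ∈ s, c p * conj (c r) * ∑' α, K α p * conj (K α r)).re := by
  have hc : HasSum (fun α => ∑ p ∈ s, ∑ r ∈ s, c p * conj (c r) * (K α p * conj (K α r)))
      (∑ p ∈ s, ∑ r ∈ s, c p * conj (c r) * ∑' α, K α p * conj (K α r)) :=
    hasSum_sum fun p _ => hasSum_sum fun r _ => (hK p r).hasSum.mul_left _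
  convert Complex.hasSum_re hc with α
  have hsq : ((‖∑ p ∈ s, c p * K α p‖ ^ 2 : ℝ) : ℂ) =
      ∑ p ∈ s, ∑ r ∈ s, c p * conj (c r) * (K α p * conj (K α r)) := by
    rw [Complex.ofReal_pow, ← Complex.mul_conj', map_sum, Finset.sum_mul_sum]
    exact Finset.sum_congr rfl fun p _ => Finset.sum_congr rfl fun r _ => by rw [map_mul]; ring
  rw [← hsq, Complex.ofReal_re]

theorem hasSum_norm_sq_kraus_matrix_element {ι κ : Type*} (K : ℕ → ι → κ → ℂ)
    (hKsum : ∀ i j k l, Summable fun α => K α i k * conj (K α j l))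
    (q : ι → ι → κ → κ → ℂ) (hK : ∀ i j k l, q i j k l = ∑' α, K α i k * conj (K α j l))
    (s : Finset ι) (t : Finset κ) (x : ι → ℂ) (y : κ → ℂ) :
    HasSum (fun α => ‖∑ i ∈ s, conj (x i) * ∑ k ∈ t, y k * K α i k‖ ^ 2)
      (∑ i ∈ s, ∑ j ∈ s, conj (x i) * x j *
        (∑ k ∈ t, ∑ l ∈ t, y k * conj (y l) * q i j k l)).re := by
  have h := hasSum_norm_sq_finset_sum_mul (fun α (p : ι × κ) => K α p.1 p.2)
    (fun p r => hKsum p.1 r.1 p.2 r.2) (s ×ˢ t) (fun p => conj (x p.1) * y p.2)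
  convert h using 3 with α
  · simp only [Finset.sum_product, Finset.mul_sum, mul_assoc]
  · simp only [Finset.sum_product, Finset.mul_sum, ← hK]
    refine Finset.sum_congr rfl fun i _ => Finset.sum_comm.trans ?_
    refine Finset.sum_congr rfl fun j _ => Finset.sum_congr rfl fun k _ =>
      Finset.sum_congr rfl fun l _ => ?_
    simp only [map_mul, Complex.conj_conj]
    ring

theorem kraus_operators_map_into_space_general {H : Type*} [NormedAddCommGroup H]
    [InnerProductSpace ℂ H]
    (f : ℕ → H)
    (q : ℕ → ℕ → ℕ → ℕ → ℂ)
    (K : ℕ → ℕ → ℕ → ℂ)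
    (hKsum : ∀ i j k l : ℕ, Summable fun α => K α i k * conj (K α j l))
    (hK : ∀ i j k l : ℕ, q i j k l = ∑' α, K α i k * conj (K α j l))
    (a : ℕ →₀ ℂ)  -- the coefficients of `φ = ∑_k a_k e_k ∈ D_e`
    (B : H →L[ℂ] H)
    (hB : ∀ b : ℕ →₀ ℂ,  -- `⟨ψ|Q(|φ⟩⟨φ|)|ψ⟩ = ⟨ψ, Bψ⟩` for `ψ = ∑_i b_i f_i ∈ D_f`
      ∑ i ∈ b.support, ∑ j ∈ b.support, conj (b i) * b j *
          (∑ k ∈ a.support, ∑ l ∈ a.support, a k * conj (a l) * q i j k l)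
        = ⟪(∑ i ∈ b.support, b i • f i), B (∑ j ∈ b.support, b j • f j)⟫_ℂ) :
    (∀ α : ℕ, ∃ C : ℝ, ∀ b : ℕ →₀ ℂ,
      ‖∑ i ∈ b.support, conj (b i) * ∑ k ∈ a.support, a k * K α i k‖
        ≤ C * ‖∑ i ∈ b.support, b i • f i‖) ∧
    ∀ b : ℕ →₀ ℂ,
      (Summable fun α =>
        ‖∑ i ∈ b.support, conj (b i) * ∑ k ∈ a.support, a k * K α i k‖ ^ 2) ∧
      (∑' α, ‖∑ i ∈ b.support, conj (b i) * ∑ k ∈ a.support, a k * K α i k‖ ^ 2)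
        ≤ ‖B‖ * ‖∑ i ∈ b.support, b i • f i‖ ^ 2 := by
  have hseries (b : ℕ →₀ ℂ) :
      HasSum (fun α => ‖∑ i ∈ b.support, conj (b i) * ∑ k ∈ a.support, a k * K α i k‖ ^ 2)
        (⟪(∑ i ∈ b.support, b i • f i), B (∑ j ∈ b.support, b j • f j)⟫_ℂ).re := by
    rw [← hB b]
    exact hasSum_norm_sq_kraus_matrix_element K hKsum q hK b.support a.support b a
  refine ⟨fun α => ⟨√‖B‖, fun b => ?_⟩,
    fun b => ⟨(hseries b).summable, (hseries b).tsum_eq ▸ B.re_inner_self_apply_le _⟩⟩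
  have hterm := (le_hasSum (hseries b) α fun β _ => by positivity).trans
    (B.re_inner_self_apply_le _)
  rw [← Real.sqrt_sq (norm_nonneg (∑ i ∈ b.support, b i • f i)), ← Real.sqrt_mul (norm_nonneg B)]
  exact Real.le_sqrt_of_sq_le hterm

/-- Corollary 1: let `Q` be a completely positive map on `D_e²` with a
generalized Kraus representation `⟨f_i|Q(|e_k⟩⟨e_ℓ|)|f_j⟩ = ∑_α ⟨f_i|K_α|e_k⟩⟨f_j|K_α|e_ℓ⟩*`
(matrix elements `q i j k l` resp. `K α i k` w.r.t. orthonormal bases `{e_n}`, `{f_n}`).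
If for `φ = ∑_k a_k e_k ∈ D_e` the quadratic form `Q(|φ⟩⟨φ|)` is given by a bounded
operator `B = Q̆(|φ⟩⟨φ|)` on `H` (tested against vectors `ψ = ∑_i b_i f_i ∈ D_f`), then
each `K_α` maps `φ` into `H`: the functional `ψ ↦ ⟨ψ|K_α|φ⟩` is bounded on `D_f`, and
`∑_α |⟨ψ|K_α|φ⟩|² ≤ ‖Q̆(|φ⟩⟨φ|)‖·‖ψ‖²` for every `ψ ∈ D_f`. -/
theorem kraus_operators_map_into_space {H : Type*} [NormedAddCommGroup H]
    [InnerProductSpace ℂ H] [CompleteSpace H] [TopologicalSpace.SeparableSpace H]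
    (f : ℕ → H) (hf : Orthonormal ℂ f)
    (hftotal : Dense ((Submodule.span ℂ (Set.range f) : Submodule ℂ H) : Set H))
    (q : ℕ → ℕ → ℕ → ℕ → ℂ)
    (hcp : ∀ (s : Finset (ℕ × ℕ)) (c : ℕ × ℕ → ℂ),
      0 ≤ ∑ p ∈ s, ∑ r ∈ s, conj (c p) * c r * q p.1 r.1 p.2 r.2)
    (K : ℕ → ℕ → ℕ → ℂ)
    (hKsum : ∀ i j k l : ℕ, Summable fun α => K α i k * conj (K α j l))
    (hK : ∀ i j k l : ℕ, q i j k l = ∑' α, K α i k * conj (K α j l))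
    (a : ℕ →₀ ℂ)  -- the coefficients of `φ = ∑_k a_k e_k ∈ D_e`
    (B : H →L[ℂ] H)
    (hB : ∀ b : ℕ →₀ ℂ,  -- `⟨ψ|Q(|φ⟩⟨φ|)|ψ⟩ = ⟨ψ, Bψ⟩` for `ψ = ∑_i b_i f_i ∈ D_f`
      ∑ i ∈ b.support, ∑ j ∈ b.support, conj (b i) * b j *
          (∑ k ∈ a.support, ∑ l ∈ a.support, a k * conj (a l) * q i j k l)
        = ⟪(∑ i ∈ b.support, b i • f i), B (∑ j ∈ b.support, b j • f j)⟫_ℂ) :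
    (∀ α : ℕ, ∃ C : ℝ, ∀ b : ℕ →₀ ℂ,
      ‖∑ i ∈ b.support, conj (b i) * ∑ k ∈ a.support, a k * K α i k‖
        ≤ C * ‖∑ i ∈ b.support, b i • f i‖) ∧
    ∀ b : ℕ →₀ ℂ,
      (Summable fun α =>
        ‖∑ i ∈ b.support, conj (b i) * ∑ k ∈ a.support, a k * K α i k‖ ^ 2) ∧
      (∑' α, ‖∑ i ∈ b.support, conj (b i) * ∑ k ∈ a.support, a k * K α i k‖ ^ 2)
        ≤ ‖B‖ * ‖∑ i ∈ b.support, b i • f i‖ ^ 2 :=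
  kraus_operators_map_into_space_general f q K hKsum hK a B hB
end
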